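/- arXiv:2212.05905 — 2 statements merged into one kernel-verified Lean document; each statement's English description precedes it below -/
import Mathlib

section
/- (Transformation lemma) Let u ∈ C⁴ be uniformly convex on Ω ⊂ ℝⁿ with cofactor matrix U of D²u, let w = (det D²u)⁻¹, and suppose Σ U^{ij} D_{ij} w = f/ε in Ω. Fix x₀ ∈ Ω̄ and a constant D* > 0, and define F(x) = D*|x − Du(x₀)|²/(2ε), η(x) = w(x) e^{F(Du(x))}, and b(x) = −(det D²u(x)) (D*/ε)(Du(x) − Du(x₀)). Then Σ U^{ij} D_{ij} η + b · Dη = ((f + D* Δu)/ε) e^{F(Du(x))} in Ω. -/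
/-
With `g = (D*/2ε)|Du - Du(x₀)|²` the product rule gives
  `U^{ij} D_{ij}(w e^g) e^{-g}`
    `= U^{ij} D_{ij} w + 2 U^{ij} D_i w D_j g + w U^{ij} D_{ij} g + w U^{ij} D_i g D_j g`.
Since `U D²u = (det D²u) I`, the vector `U^{ij} D_j g` is `(det D²u)(D*/ε)(Du - Du(x₀)) = -b`,
so the drift absorbs the last term and one of the two cross terms. In `U^{ij} D_{ij} g` the third
derivatives of `u` enter only through `U^{ij} D_k u_{ij} = D_k det D²u` (Jacobi's formula), that
is through `Dw = -w² D det D²u`, and they cancel the remaining cross term; what is left of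
`w U^{ij} D_{ij} g` is `(D*/ε) Δu`.
-/

open RealInnerProductSpace Matrix

/-- Second partial derivative `D_{ij} f`. -/
noncomputable def D2 {n : ℕ} (f : EuclideanSpace ℝ (Fin n) → ℝ)
    (x : EuclideanSpace ℝ (Fin n)) (i j : Fin n) : ℝ :=
  fderiv ℝ (fun y => fderiv ℝ f y (EuclideanSpace.single i 1)) x (EuclideanSpace.single j 1)

/-- Hessian matrix of `f` at `x`. -/
noncomputable def Hess {n : ℕ} (f : EuclideanSpace ℝ (Fin n) → ℝ)
    (x : EuclideanSpace ℝ (Fin n)) : Matrix (Fin n) (Fin n) ℝ :=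
  Matrix.of fun i j => D2 f x i j

open Filter Topology

noncomputable def partialDeriv {n : ℕ} (f : EuclideanSpace ℝ (Fin n) → ℝ)
    (x : EuclideanSpace ℝ (Fin n)) (i : Fin n) : ℝ :=
  fderiv ℝ f x (EuclideanSpace.single i 1)

section Calculus

variable {n : ℕ} {f g : EuclideanSpace ℝ (Fin n) → ℝ} {x : EuclideanSpace ℝ (Fin n)}

theorem D2_eq_partialDeriv (f : EuclideanSpace ℝ (Fin n) → ℝ) (x : EuclideanSpace ℝ (Fin n))
    (i j : Fin n) : D2 f x i j = partialDeriv (fun y => partialDeriv f y i) x j :=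
  rfl

theorem gradient_apply_eq_partialDeriv (f : EuclideanSpace ℝ (Fin n) → ℝ)
    (x : EuclideanSpace ℝ (Fin n)) (i : Fin n) : gradient f x i = partialDeriv f x i := by
  have h := EuclideanSpace.inner_single_right (𝕜 := ℝ) i 1 (gradient f x)
  simp only [RCLike.conj_to_real, one_mul] at h
  rw [← h, gradient, InnerProductSpace.toDual_symm_apply, partialDeriv]

theorem Filter.EventuallyEq.partialDeriv_eq (h : f =ᶠ[𝓝 x] g) (i : Fin n) :
    partialDeriv f x i = partialDeriv g x i := by
  rw [partialDeriv, h.fderiv_eq, partialDeriv]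

theorem partialDeriv_add (hf : DifferentiableAt ℝ f x) (hg : DifferentiableAt ℝ g x)
    (i : Fin n) :
    partialDeriv (fun y => f y + g y) x i = partialDeriv f x i + partialDeriv g x i := by
  simp [partialDeriv, fderiv_fun_add hf hg]

theorem partialDeriv_mul (hf : DifferentiableAt ℝ f x) (hg : DifferentiableAt ℝ g x)
    (i : Fin n) :
    partialDeriv (fun y => f y * g y) x i
      = partialDeriv f x i * g x + f x * partialDeriv g x i := by
  simp only [partialDeriv, fderiv_fun_mul hf hg, _root_.add_apply, _root_.smul_apply, smul_eq_mul]
  ring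

theorem partialDeriv_const_mul (a : ℝ) (f : EuclideanSpace ℝ (Fin n) → ℝ) (i : Fin n) :
    partialDeriv (fun y => a * f y) x i = a * partialDeriv f x i := by
  change fderiv ℝ (a • f) x _ = _
  rw [fderiv_const_smul_field]
  rfl

theorem partialDeriv_sub_const (a : ℝ) (f : EuclideanSpace ℝ (Fin n) → ℝ) (i : Fin n) :
    partialDeriv (fun y => f y - a) x i = partialDeriv f x i := by
  rw [partialDeriv, fderiv_sub_const, partialDeriv]

theorem partialDeriv_sum {ι : Type*} {s : Finset ι}
    {F : ι → EuclideanSpace ℝ (Fin n) → ℝ} (hF : ∀ k ∈ s, DifferentiableAt ℝ (F k) x)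
    (i : Fin n) :
    partialDeriv (fun y => ∑ k ∈ s, F k y) x i = ∑ k ∈ s, partialDeriv (F k) x i := by
  simp [partialDeriv, fderiv_fun_sum hF]

theorem partialDeriv_exp (hg : DifferentiableAt ℝ g x) (i : Fin n) :
    partialDeriv (fun y => Real.exp (g y)) x i = Real.exp (g x) * partialDeriv g x i := by
  simp [partialDeriv, fderiv_exp hg]

theorem partialDeriv_inv (hf : DifferentiableAt ℝ f x) (hx : f x ≠ 0) (i : Fin n) :
    partialDeriv (fun y => (f y)⁻¹) x i = -(f x ^ 2)⁻¹ * partialDeriv f x i := by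
  have h : HasFDerivAt (fun y => (f y)⁻¹) (-(f x ^ 2)⁻¹ • fderiv ℝ f x) x :=
    (hasDerivAt_inv hx).comp_hasFDerivAt x hf.hasFDerivAt
  simp [partialDeriv, h.fderiv]

theorem ContDiffAt.contDiffAt_partialDeriv {m k : WithTop ℕ∞} (hf : ContDiffAt ℝ k f x)
    (hmk : m + 1 ≤ k) (i : Fin n) : ContDiffAt ℝ m (fun y => partialDeriv f y i) x :=
  (hf.fderiv_right hmk).clm_apply contDiffAt_const

theorem ContDiffAt.differentiableAt_partialDeriv (hf : ContDiffAt ℝ 2 f x) (i : Fin n) :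
    DifferentiableAt ℝ (fun y => partialDeriv f y i) x :=
  (hf.contDiffAt_partialDeriv (m := 1) (by norm_num) i).differentiableAt one_ne_zero

theorem ContDiffAt.eventually_differentiableAt (hf : ContDiffAt ℝ 2 f x) :
    ∀ᶠ y in 𝓝 x, DifferentiableAt ℝ f y :=
  (hf.eventually (by simp)).mono fun _ hy => hy.differentiableAt two_ne_zero

theorem D2_symm (hf : ContDiffAt ℝ 2 f x) (i j : Fin n) : D2 f x i j = D2 f x j i := by
  have hdiff : DifferentiableAt ℝ (fderiv ℝ f) x :=
    (hf.fderiv_right (m := 1) (by norm_num)).differentiableAt one_ne_zero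
  have hD2 : ∀ i j, D2 f x i j = fderiv ℝ (fderiv ℝ f) x (EuclideanSpace.single j 1)
      (EuclideanSpace.single i 1) := fun i j => by
    rw [D2, fderiv_clm_apply hdiff (differentiableAt_const _)]
    simp
  rw [hD2, hD2, hf.isSymmSndFDerivAt (by simp)]

theorem D2_mul (hf : ContDiffAt ℝ 2 f x) (hg : ContDiffAt ℝ 2 g x) (i j : Fin n) :
    D2 (fun y => f y * g y) x i j = D2 f x i j * g x + partialDeriv f x i * partialDeriv g x j
      + partialDeriv f x j * partialDeriv g x i + f x * D2 g x i j := by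
  have hfirst : (fun y => partialDeriv (fun y => f y * g y) y i) =ᶠ[𝓝 x]
      fun y => partialDeriv f y i * g y + f y * partialDeriv g y i := by
    filter_upwards [hf.eventually_differentiableAt, hg.eventually_differentiableAt]
      with y hfy hgy using partialDeriv_mul hfy hgy i
  have hf₁ := hf.differentiableAt two_ne_zero
  have hg₁ := hg.differentiableAt two_ne_zero
  have hfi := hf.differentiableAt_partialDeriv i
  have hgi := hg.differentiableAt_partialDeriv i
  rw [D2_eq_partialDeriv, hfirst.partialDeriv_eq,
    partialDeriv_add (hfi.fun_mul hg₁) (hf₁.fun_mul hgi), partialDeriv_mul hfi hg₁,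
    partialDeriv_mul hf₁ hgi, D2_eq_partialDeriv, D2_eq_partialDeriv]
  ring

theorem D2_exp (hg : ContDiffAt ℝ 2 g x) (i j : Fin n) :
    D2 (fun y => Real.exp (g y)) x i j
      = (D2 g x i j + partialDeriv g x i * partialDeriv g x j) * Real.exp (g x) := by
  have hfirst : (fun y => partialDeriv (fun y => Real.exp (g y)) y i) =ᶠ[𝓝 x]
      fun y => Real.exp (g y) * partialDeriv g y i := by
    filter_upwards [hg.eventually_differentiableAt] with y hgy using partialDeriv_exp hgy i
  have hg₁ := hg.differentiableAt two_ne_zero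
  rw [D2_eq_partialDeriv, hfirst.partialDeriv_eq,
    partialDeriv_mul hg₁.exp (hg.differentiableAt_partialDeriv i), partialDeriv_exp hg₁,
    D2_eq_partialDeriv]
  ring

theorem D2_const_mul (a : ℝ) (f : EuclideanSpace ℝ (Fin n) → ℝ) (i j : Fin n) :
    D2 (fun y => a * f y) x i j = a * D2 f x i j := by
  simp only [D2_eq_partialDeriv, partialDeriv_const_mul]

theorem D2_sub_const (a : ℝ) (f : EuclideanSpace ℝ (Fin n) → ℝ) (i j : Fin n) :
    D2 (fun y => f y - a) x i j = D2 f x i j := by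
  simp only [D2_eq_partialDeriv, partialDeriv_sub_const]

theorem D2_sum {ι : Type*} {s : Finset ι} {F : ι → EuclideanSpace ℝ (Fin n) → ℝ}
    (hF : ∀ k ∈ s, ContDiffAt ℝ 2 (F k) x) (i j : Fin n) :
    D2 (fun y => ∑ k ∈ s, F k y) x i j = ∑ k ∈ s, D2 (F k) x i j := by
  have hfirst : (fun y => partialDeriv (fun y => ∑ k ∈ s, F k y) y i) =ᶠ[𝓝 x]
      fun y => ∑ k ∈ s, partialDeriv (F k) y i := by
    filter_upwards [(eventually_all_finset s).2 fun k hk =>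
      (hF k hk).eventually_differentiableAt] with y hy using partialDeriv_sum hy i
  rw [D2_eq_partialDeriv, hfirst.partialDeriv_eq,
    partialDeriv_sum fun k hk => (hF k hk).differentiableAt_partialDeriv i]
  rfl

theorem partialDeriv_mul_exp (hf : DifferentiableAt ℝ f x) (hg : DifferentiableAt ℝ g x)
    (i : Fin n) :
    partialDeriv (fun y => f y * Real.exp (g y)) x i
      = (partialDeriv f x i + f x * partialDeriv g x i) * Real.exp (g x) := by
  rw [partialDeriv_mul hf hg.exp, partialDeriv_exp hg]
  ring

theorem D2_mul_exp (hf : ContDiffAt ℝ 2 f x) (hg : ContDiffAt ℝ 2 g x) (i j : Fin n) :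
    D2 (fun y => f y * Real.exp (g y)) x i j
      = (D2 f x i j + partialDeriv f x i * partialDeriv g x j
        + partialDeriv f x j * partialDeriv g x i
        + f x * (D2 g x i j + partialDeriv g x i * partialDeriv g x j)) * Real.exp (g x) := by
  have hg₁ := hg.differentiableAt two_ne_zero
  rw [D2_mul hf hg.exp, partialDeriv_exp hg₁, partialDeriv_exp hg₁, D2_exp hg]
  ring

theorem partialDeriv_half_sum_sq {ι : Type*} [Fintype ι]
    {q : ι → EuclideanSpace ℝ (Fin n) → ℝ} (c : ℝ)
    (hq : ∀ k, DifferentiableAt ℝ (q k) x) (i : Fin n) :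
    partialDeriv (fun y => c / 2 * ∑ k, q k y ^ 2) x i
      = c * ∑ k, q k x * partialDeriv (q k) x i := by
  simp only [sq, partialDeriv_const_mul,
    partialDeriv_sum fun k _ => (hq k).fun_mul (hq k), partialDeriv_mul (hq _) (hq _)]
  rw [Finset.mul_sum, Finset.mul_sum]
  exact Finset.sum_congr rfl fun k _ => by ring

theorem D2_half_sum_sq {ι : Type*} [Fintype ι] {q : ι → EuclideanSpace ℝ (Fin n) → ℝ}
    (c : ℝ) (hq : ∀ k, ContDiffAt ℝ 2 (q k) x) (i j : Fin n) :
    D2 (fun y => c / 2 * ∑ k, q k y ^ 2) x i j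
      = c * ∑ k, (partialDeriv (q k) x i * partialDeriv (q k) x j + q k x * D2 (q k) x i j) := by
  simp only [sq, D2_const_mul, D2_sum fun k _ => (hq k).mul (hq k), D2_mul (hq _) (hq _)]
  rw [Finset.mul_sum, Finset.mul_sum]
  exact Finset.sum_congr rfl fun k _ => by ring

end Calculus

section Determinant

open Equiv

variable {ι : Type*} [Fintype ι] [DecidableEq ι]

theorem Matrix.adjugate_mulVec_apply_eq_sum_perm (A : Matrix ι ι ℝ) (i : ι) (c : ι → ℝ) :
    (A.adjugate *ᵥ c) i =
      ∑ σ : Perm ι,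
        (Perm.sign σ : ℝ) * ((∏ j ∈ Finset.univ.erase i, A (σ j) j) * c (σ i)) := by
  rw [← cramer_eq_adjugate_mulVec, cramer_apply, det_apply']
  refine Finset.sum_congr rfl fun σ _ => ?_
  rw [← Finset.mul_prod_erase _ _ (Finset.mem_univ i), updateCol_self,
    Finset.prod_congr rfl fun j hj => updateCol_ne (Finset.ne_of_mem_erase hj), mul_comm (c (σ i))]

theorem hasFDerivAt_det {E : Type*} [NormedAddCommGroup E] [NormedSpace ℝ E]
    {M : E → Matrix ι ι ℝ} {M' : ι → ι → E →L[ℝ] ℝ} {x : E}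
    (hM : ∀ i j, HasFDerivAt (fun y => M y i j) (M' i j) x) :
    HasFDerivAt (fun y => (M y).det) (∑ i, ∑ j, (M x).adjugate j i • M' i j) x := by
  simp only [det_apply']
  refine (HasFDerivAt.fun_sum fun σ _ =>
    (HasFDerivAt.finsetProd fun i _ => hM (σ i) i).const_mul (Perm.sign σ : ℝ)).congr_fderiv ?_
  ext v
  simp only [_root_.sum_apply, _root_.smul_apply, smul_eq_mul, Finset.mul_sum]
  rw [Finset.sum_comm]
  conv_rhs => rw [Finset.sum_comm]
  exact Finset.sum_congr rfl fun j _ =>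
    (Matrix.adjugate_mulVec_apply_eq_sum_perm (M x) j fun a => M' a j v).symm

theorem contDiffAt_det {E : Type*} [NormedAddCommGroup E] [NormedSpace ℝ E] {m : WithTop ℕ∞}
    {M : E → Matrix ι ι ℝ} {x : E} (hM : ∀ i j, ContDiffAt ℝ m (fun y => M y i j) x) :
    ContDiffAt ℝ m (fun y => (M y).det) x := by
  simp only [det_apply']
  exact ContDiffAt.sum fun σ _ => contDiffAt_const.mul (contDiffAt_prod fun i _ => hM (σ i) i)

theorem partialDeriv_det {n : ℕ} {M : EuclideanSpace ℝ (Fin n) → Matrix ι ι ℝ}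
    {x : EuclideanSpace ℝ (Fin n)} (hM : ∀ i j, DifferentiableAt ℝ (fun y => M y i j) x)
    (m : Fin n) :
    partialDeriv (fun y => (M y).det) x m
      = ∑ i, ∑ j, (M x).adjugate j i * partialDeriv (fun y => M y i j) x m := by
  rw [partialDeriv, (hasFDerivAt_det fun i j => (hM i j).hasFDerivAt).fderiv]
  simp [partialDeriv]

end Determinant

section Contraction

variable {ι : Type*} [Fintype ι]

theorem sum_sum_mul_mul_eq_dotProduct_mulVec (M : Matrix ι ι ℝ) (a b : ι → ℝ) :
    ∑ i, ∑ j, M i j * (a i * b j) = a ⬝ᵥ (M *ᵥ b) := by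
  simp only [dotProduct, mulVec, Finset.mul_sum]
  exact Finset.sum_congr rfl fun i _ => Finset.sum_congr rfl fun j _ => by ring

variable [DecidableEq ι]

theorem Matrix.IsSymm.sum_adjugate_mul_transpose_mul_self {H : Matrix ι ι ℝ} (hH : H.IsSymm) :
    ∑ i, ∑ j, H.adjugate i j * ∑ k, H k i * H k j = H.det * H.trace := by
  have h := Matrix.sum_hadamard_eq H.adjugate (Hᵀ * H)
  simp only [hadamard_apply, mul_apply, transpose_apply] at h
  rw [h, transpose_mul, transpose_transpose, hH.eq, ← Matrix.mul_assoc, adjugate_mul,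
    smul_mul, Matrix.one_mul, trace_smul, smul_eq_mul]

theorem Matrix.IsSymm.sum_adjugate_mul_sum_mul_cyclic {H : Matrix ι ι ℝ} (hH : H.IsSymm)
    (T : ι → ι → ι → ℝ) (hT : ∀ k i j, T k i j = T i j k) (Q : ι → ℝ) :
    ∑ i, ∑ j, H.adjugate i j * ∑ k, Q k * T k i j
      = ∑ k, Q k * ∑ i, ∑ j, H.adjugate j i * T i j k := by
  calc ∑ i, ∑ j, H.adjugate i j * ∑ k, Q k * T k i j
      = ∑ i, ∑ k, ∑ j, Q k * (H.adjugate j i * T i j k) := by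
        refine Finset.sum_congr rfl fun i _ => ?_
        simp only [Finset.mul_sum]
        rw [Finset.sum_comm]
        refine Finset.sum_congr rfl fun k _ => Finset.sum_congr rfl fun j _ => ?_
        rw [hH.adjugate.apply, hT k i j]
        ring
    _ = ∑ k, Q k * ∑ i, ∑ j, H.adjugate j i * T i j k := by
        rw [Finset.sum_comm]
        simp only [Finset.mul_sum]

/-- In the application `H = D²u`, `T k i j = D_{kij} u`, `Q = Du - Du(x₀)`, and `Dg`, `Dw` are
the gradients of `g = (c/2)|Q|²` and `w = (det D²u)⁻¹`; `hDw` is Jacobi's formula. -/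
theorem algebraic_transformation_identity {H : Matrix ι ι ℝ} (hH : H.IsSymm) (hd : H.det ≠ 0)
    (T : ι → ι → ι → ℝ) (hT : ∀ k i j, T k i j = T i j k)
    (A : ι → ι → ℝ) (Q Dg Dw : ι → ℝ) (c w : ℝ) (hw : w = H.det⁻¹)
    (hDg : ∀ i, Dg i = c * ∑ k, Q k * H k i)
    (hDw : ∀ m, Dw m = -(H.det ^ 2)⁻¹ * ∑ i, ∑ j, H.adjugate j i * T i j m) :
    ∑ i, ∑ j, H.adjugate i j * (A i j + Dw i * Dg j + Dw j * Dg i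
        + w * (c * ∑ k, (H k i * H k j + Q k * T k i j) + Dg i * Dg j))
      - H.det * c * ∑ k, Q k * (Dw k + w * Dg k)
      = ∑ i, ∑ j, H.adjugate i j * A i j + c * H.trace := by
  have hadjDg : H.adjugate *ᵥ Dg = (c * H.det) • Q := by
    have hDg' : Dg = c • (H *ᵥ Q) := funext fun i => by
      simp only [hDg, Pi.smul_apply, mulVec, dotProduct, smul_eq_mul, hH.apply i, mul_comm (Q _)]
    rw [hDg', mulVec_smul, mulVec_mulVec, adjugate_mul, smul_mulVec, one_mulVec, smul_smul]
  have hQDw :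
      Q ⬝ᵥ Dw = -(H.det ^ 2)⁻¹ * ∑ k, Q k * ∑ i, ∑ j, H.adjugate j i * T i j k := by
    simp only [dotProduct, hDw]
    rw [Finset.mul_sum]
    exact Finset.sum_congr rfl fun k _ => by ring
  have hsplit : ∀ i j, H.adjugate i j * (A i j + Dw i * Dg j + Dw j * Dg i
      + w * (c * ∑ k, (H k i * H k j + Q k * T k i j) + Dg i * Dg j))
      = H.adjugate i j * A i j + H.adjugate i j * (Dw i * Dg j) + H.adjugate i j * (Dg i * Dw j)
        + w * c * (H.adjugate i j * ∑ k, H k i * H k j)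
        + w * c * (H.adjugate i j * ∑ k, Q k * T k i j)
        + w * (H.adjugate i j * (Dg i * Dg j)) := fun i j => by
    rw [Finset.sum_add_distrib]
    ring
  simp only [hsplit]
  simp only [Finset.sum_add_distrib, ← Finset.mul_sum]
  rw [sum_sum_mul_mul_eq_dotProduct_mulVec, sum_sum_mul_mul_eq_dotProduct_mulVec,
    sum_sum_mul_mul_eq_dotProduct_mulVec, hH.sum_adjugate_mul_transpose_mul_self,
    hH.sum_adjugate_mul_sum_mul_cyclic T hT, dotProduct_mulVec Dg, ← mulVec_transpose,
    hH.adjugate.eq, hadjDg]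
  have hdrift : ∑ k, Q k * (Dw k + w * Dg k) = Q ⬝ᵥ Dw + w * (Q ⬝ᵥ Dg) := by
    simp only [dotProduct, mul_add, Finset.sum_add_distrib, Finset.mul_sum, mul_left_comm]
  rw [hdrift, dotProduct_comm Dw, dotProduct_comm Dg]
  simp only [smul_dotProduct, smul_eq_mul]
  rw [hQDw, hw]
  field_simp
  ring

end Contraction

section Transformation

variable {n : ℕ} {u w : EuclideanSpace ℝ (Fin n) → ℝ} {x : EuclideanSpace ℝ (Fin n)}

theorem isSymm_Hess (hu : ContDiffAt ℝ 2 u x) : (Hess u x).IsSymm :=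
  Matrix.IsSymm.ext fun i j => D2_symm hu j i

theorem contDiffAt_Hess_apply {m k : WithTop ℕ∞} (hu : ContDiffAt ℝ k u x) (hmk : m + 2 ≤ k)
    (i j : Fin n) : ContDiffAt ℝ m (fun y => Hess u y i j) x :=
  (hu.contDiffAt_partialDeriv (m := m + 1) (by simpa [add_assoc]) i).contDiffAt_partialDeriv
    le_rfl j

theorem D2_partialDeriv_cyclic (hu : ContDiffAt ℝ 3 u x) (k i j : Fin n) :
    D2 (fun y => partialDeriv u y k) x i j = D2 (fun y => partialDeriv u y i) x j k := by
  have hsymm : (fun y => D2 u y k i) =ᶠ[𝓝 x] fun y => D2 u y i k := by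
    filter_upwards [hu.eventually (by simp)] with y hy using D2_symm (hy.of_le (by norm_num)) k i
  exact (hsymm.partialDeriv_eq j).trans
    (D2_symm (hu.contDiffAt_partialDeriv (by norm_num) i) k j)

theorem partialDeriv_inv_det_Hess (hu : ContDiffAt ℝ 3 u x) (hd : (Hess u x).det ≠ 0)
    (hw : w =ᶠ[𝓝 x] fun y => ((Hess u y).det)⁻¹) (m : Fin n) :
    partialDeriv w x m = -((Hess u x).det ^ 2)⁻¹
      * ∑ i, ∑ j, (Hess u x).adjugate j i * D2 (fun y => partialDeriv u y i) x j m := by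
  have hentries : ∀ i j, ContDiffAt ℝ 1 (fun y => Hess u y i j) x :=
    contDiffAt_Hess_apply hu (by norm_num)
  rw [hw.partialDeriv_eq, partialDeriv_inv
    ((contDiffAt_det hentries).differentiableAt one_ne_zero) hd,
    partialDeriv_det fun i j => (hentries i j).differentiableAt one_ne_zero]
  rfl

theorem transformation_identity (hu : ContDiffAt ℝ 4 u x) (hd : (Hess u x).det ≠ 0)
    (hw : w =ᶠ[𝓝 x] fun y => ((Hess u y).det)⁻¹) (c : ℝ) (p : EuclideanSpace ℝ (Fin n))
    (η : EuclideanSpace ℝ (Fin n) → ℝ)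
    (hη : ∀ y, η y = w y * Real.exp (c / 2 * ‖gradient u y - p‖ ^ 2)) :
    ∑ i, ∑ j, (Hess u x).adjugate i j * D2 η x i j
      - (Hess u x).det * c * ⟪gradient u x - p, gradient η x⟫
      = (∑ i, ∑ j, (Hess u x).adjugate i j * D2 w x i j + c * (Hess u x).trace)
        * Real.exp (c / 2 * ‖gradient u x - p‖ ^ 2) := by
  obtain rfl : η = _ := funext hη
  set q := fun (k : Fin n) y => partialDeriv u y k - p k with hq_def
  obtain ⟨g, hg_def⟩ : ∃ g, g = fun y => c / 2 * ∑ k, q k y ^ 2 := ⟨_, rfl⟩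
  have hg_apply : ∀ y, c / 2 * ‖gradient u y - p‖ ^ 2 = g y := fun y => by
    simp [hg_def, EuclideanSpace.real_norm_sq_eq, hq_def, gradient_apply_eq_partialDeriv]
  have hinner : ∀ v, ⟪gradient u x - p, v⟫ = ∑ k, q k x * v k := fun v => by
    simp [PiLp.inner_apply, hq_def, gradient_apply_eq_partialDeriv, mul_comm]
  simp only [hg_apply, hinner, gradient_apply_eq_partialDeriv]
  have hq : ∀ k, ContDiffAt ℝ 3 (q k) x := fun k =>
    (hu.contDiffAt_partialDeriv (by norm_num) k).sub contDiffAt_const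
  have hqi : ∀ k i, partialDeriv (q k) x i = Hess u x k i := fun k i =>
    partialDeriv_sub_const _ _ i
  have hqij : ∀ k i j, D2 (q k) x i j = D2 (fun y => partialDeriv u y k) x i j :=
    fun k i j => D2_sub_const _ _ i j
  have hg : ContDiffAt ℝ 2 g x := hg_def ▸
    contDiffAt_const.mul (ContDiffAt.sum fun k _ => ((hq k).of_le (by norm_num)).pow 2)
  have hgi : ∀ i, partialDeriv g x i = c * ∑ k, q k x * Hess u x k i := fun i => by
    simp only [hg_def, partialDeriv_half_sum_sq c
      (fun k => (hq k).differentiableAt (by norm_num)), hqi]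
  have hgij : ∀ i j, D2 g x i j = c * ∑ k, (Hess u x k i * Hess u x k j
      + q k x * D2 (fun y => partialDeriv u y k) x i j) := fun i j => by
    simp only [hg_def, D2_half_sum_sq c (fun k => (hq k).of_le (by norm_num)), hqi, hqij]
  have hw₂ : ContDiffAt ℝ 2 w x :=
    ((contDiffAt_det (contDiffAt_Hess_apply hu (by norm_num))).inv hd).congr_of_eventuallyEq hw
  have key := algebraic_transformation_identity (isSymm_Hess (hu.of_le (by norm_num))) hd _
    (D2_partialDeriv_cyclic (hu.of_le (by norm_num))) (D2 w x) (fun k => q k x)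
    (partialDeriv g x) (partialDeriv w x) c (w x) hw.self_of_nhds hgi
    (partialDeriv_inv_det_Hess (hu.of_le (by norm_num)) hd hw)
  rw [← key]
  simp only [D2_mul_exp hw₂ hg, partialDeriv_mul_exp (hw₂.differentiableAt two_ne_zero)
    (hg.differentiableAt two_ne_zero), hgij, sub_mul, Finset.sum_mul, mul_assoc]

end Transformation

theorem stmt3_general {n : ℕ} (Ω : Set (EuclideanSpace ℝ (Fin n)))
    (hΩo : IsOpen Ω)
    (u w f : EuclideanSpace ℝ (Fin n) → ℝ)
    (U : EuclideanSpace ℝ (Fin n) → Matrix (Fin n) (Fin n) ℝ)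
    (hu : ContDiffOn ℝ 4 u (closure Ω))
    (hconv : ∀ x ∈ closure Ω, (Hess u x).PosDef)
    (hU : ∀ x ∈ closure Ω, U x = (Hess u x).det • (Hess u x)⁻¹)
    (hw : ∀ x ∈ closure Ω, w x = ((Hess u x).det)⁻¹)
    (ε : ℝ)
    (hPDE : ∀ x ∈ Ω, ∑ i, ∑ j, U x i j * D2 w x i j = f x / ε)
    (x₀ : EuclideanSpace ℝ (Fin n))
    (Dstar : ℝ)
    (F : EuclideanSpace ℝ (Fin n) → ℝ)
    (hF : ∀ p, F p = Dstar * ‖p - gradient u x₀‖ ^ 2 / (2 * ε))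
    (η : EuclideanSpace ℝ (Fin n) → ℝ)
    (hη : ∀ x, η x = w x * Real.exp (F (gradient u x)))
    (b : EuclideanSpace ℝ (Fin n) → EuclideanSpace ℝ (Fin n))
    (hb : ∀ x, b x =
      (-((Hess u x).det * (Dstar / ε))) • (gradient u x - gradient u x₀)) :
    ∀ x ∈ Ω,
      (∑ i, ∑ j, U x i j * D2 η x i j) + ⟪b x, gradient η x⟫ =
        ((f x + Dstar * ∑ i, D2 u x i i) / ε) * Real.exp (F (gradient u x)) := by
  intro x hx
  have hxc : x ∈ closure Ω := subset_closure hx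
  have hxΩ : closure Ω ∈ 𝓝 x := mem_of_superset (hΩo.mem_nhds hx) subset_closure
  have hd : (Hess u x).det ≠ 0 := (hconv x hxc).det_pos.ne'
  have hUx : U x = (Hess u x).adjugate := by
    rw [hU x hxc, inv_def, smul_smul, Ring.inverse_eq_inv', mul_inv_cancel₀ hd, one_smul]
  have hFc : ∀ p, F p = Dstar / ε / 2 * ‖p - gradient u x₀‖ ^ 2 := fun p => by
    rw [hF]
    ring
  have key := transformation_identity ((hu x hxc).contDiffAt hxΩ) hd
    (eventually_of_mem hxΩ hw) (Dstar / ε) (gradient u x₀) η fun y => by rw [hη, hFc]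
  have htrace : (Hess u x).trace = ∑ i, D2 u x i i := rfl
  rw [← hUx, hPDE x hx, htrace, ← hFc] at key
  rw [hb, real_inner_smul_left]
  linear_combination key

/-- the transformation lemma for the singular Abreu equation:
`η = w e^{F(Du)}` with drift `b` satisfies the transformed linearized
Monge–Ampère equation with right-hand side `((f + D* Δu)/ε) e^{F(Du)}`. -/
theorem stmt3 {n : ℕ} (Ω : Set (EuclideanSpace ℝ (Fin n)))
    (hΩo : IsOpen Ω) (hΩb : Bornology.IsBounded Ω)
    (u w f : EuclideanSpace ℝ (Fin n) → ℝ)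
    (U : EuclideanSpace ℝ (Fin n) → Matrix (Fin n) (Fin n) ℝ)
    (hu : ContDiffOn ℝ 4 u (closure Ω))
    (hconv : ∀ x ∈ closure Ω, (Hess u x).PosDef)
    (hU : ∀ x ∈ closure Ω, U x = (Hess u x).det • (Hess u x)⁻¹)
    (hw : ∀ x ∈ closure Ω, w x = ((Hess u x).det)⁻¹)
    (ε : ℝ) (hε : 0 < ε)
    (hPDE : ∀ x ∈ Ω, ∑ i, ∑ j, U x i j * D2 w x i j = f x / ε)
    (x₀ : EuclideanSpace ℝ (Fin n)) (hx₀ : x₀ ∈ closure Ω)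
    (Dstar : ℝ) (hDstar : 0 < Dstar)
    (F : EuclideanSpace ℝ (Fin n) → ℝ)
    (hF : ∀ p, F p = Dstar * ‖p - gradient u x₀‖ ^ 2 / (2 * ε))
    (η : EuclideanSpace ℝ (Fin n) → ℝ)
    (hη : ∀ x, η x = w x * Real.exp (F (gradient u x)))
    (b : EuclideanSpace ℝ (Fin n) → EuclideanSpace ℝ (Fin n))
    (hb : ∀ x, b x =
      (-((Hess u x).det * (Dstar / ε))) • (gradient u x - gradient u x₀)) :
    ∀ x ∈ Ω,
      (∑ i, ∑ j, U x i j * D2 η x i j) + ⟪b x, gradient η x⟫ =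
        ((f x + Dstar * ∑ i, D2 u x i i) / ε) * Real.exp (F (gradient u x)) :=
  stmt3_general Ω hΩo u w f U hu hconv hU hw ε hPDE x₀ Dstar F hF η hη b hb
end

section
/- Under the normalization B₁(0) ⊂ T⁻¹(S_u(x₀,h)) ⊂ B_n(0) with T x = A_h x + b_h, and λ ≤ det D²u ≤ Λ, the determinant of A_h satisfies C(n,λ,Λ)⁻¹ h^{n/2} ≤ det A_h ≤ C(n,λ,Λ) h^{n/2}. -/
open RealInnerProductSpace MeasureTheory

/-- The section `S_u(z,h)` of a convex function `u` on `Ω`. -/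
noncomputable def sectMA {n : ℕ} (Ω : Set (EuclideanSpace ℝ (Fin n)))
    (u : EuclideanSpace ℝ (Fin n) → ℝ) (z : EuclideanSpace ℝ (Fin n)) (h : ℝ) :
    Set (EuclideanSpace ℝ (Fin n)) :=
  {y ∈ Ω | u y < u z + ⟪gradient u z, y - z⟫ + h}

/-!
Let `ℓ y = u x₀ + ⟪∇u x₀, y - x₀⟫ + h`, so that `S = {u < ℓ}`, and compare `u` with the
quadratics `ℓ + (c/2) (‖A⁻¹(y - b)‖² - r²)`, whose Hessian is `c·I` in the normalized coordinates
`z = A⁻¹(y - b)`. At an interior extremum of the difference, `Aᵀ D²u A` lies above (resp. below)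
`c·I`, hence `det(A)² det D²u` lies above (resp. below) `cⁿ`.

* `r = n`, `c = h/n²`: on `∂S` the difference is `≥ 0` (there `u = ℓ` and `‖z‖ ≤ n`), at `x₀` it is
  `< 0`; the minimum is interior and `(h/n²)ⁿ ≤ Λ det(A)²`.
* `r = 1`, `c = 4h`: on `∂S` the difference is `≤ 0` (there `‖z‖ ≥ 1`), at the centre `b` it is
  `> 0` since `u(b) ≥ ℓ(b) - h` by convexity; the maximum is interior and `λ det(A)² ≤ (4h)ⁿ`.
-/

open Filter Topology Set Matrix

theorem IsLocalMin.nonneg_of_hasDerivAt_of_hasDerivAt {g g' : ℝ → ℝ} {a g'' : ℝ}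
    (hmin : IsLocalMin g a) (hg : ∀ᶠ t in 𝓝 a, HasDerivAt g (g' t) t)
    (hg' : HasDerivAt g' g'' a) : 0 ≤ g'' := by
  by_contra! hneg
  have hderiv : deriv g =ᶠ[𝓝 a] g' := hg.mono fun t ht => ht.deriv
  -- by the second-derivative test `a` is also a local maximum, so `g` is locally constant
  have hmax : IsLocalMax g a :=
    isLocalMax_of_deriv_deriv_neg (by rwa [hderiv.deriv_eq, hg'.deriv])
      (hderiv.eq_of_nhds.trans (hmin.hasDerivAt_eq_zero hg.self_of_nhds))
      hg.self_of_nhds.continuousAt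
  have hconst : g =ᶠ[𝓝 a] fun _ => g a := (hmin.and hmax).mono fun t ht => le_antisymm ht.2 ht.1
  have hzero : g' =ᶠ[𝓝 a] fun _ => 0 :=
    hderiv.symm.trans (hconst.deriv.trans (.of_eq (funext fun _ => deriv_const _ _)))
  exact hneg.ne ((hg'.congr_of_eventuallyEq hzero.symm).unique (hasDerivAt_const a 0))

theorem IsLocalMax.nonpos_of_hasDerivAt_of_hasDerivAt {g g' : ℝ → ℝ} {a g'' : ℝ}
    (hmax : IsLocalMax g a) (hg : ∀ᶠ t in 𝓝 a, HasDerivAt g (g' t) t)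
    (hg' : HasDerivAt g' g'' a) : g'' ≤ 0 :=
  neg_nonneg.mp <| hmax.neg.nonneg_of_hasDerivAt_of_hasDerivAt (hg.mono fun _ ht => ht.neg) hg'.neg

section Calculus

variable {E : Type*} [NormedAddCommGroup E] [NormedSpace ℝ E] {u : E → ℝ} {x v : E}

theorem ContDiffAt.differentiableAt_fderiv (hu : ContDiffAt ℝ 2 u x) :
    DifferentiableAt ℝ (fderiv ℝ u) x :=
  (hu.fderiv_right (m := 1) le_rfl).differentiableAt one_ne_zero

theorem hasDerivAt_add_smul (x v : E) (t : ℝ) : HasDerivAt (fun s : ℝ => x + s • v) v t := by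
  simpa using ((hasDerivAt_id t).smul_const v).const_add x

theorem ContDiffAt.eventually_hasDerivAt_comp_add_smul (hu : ContDiffAt ℝ 2 u x) (v : E) :
    ∀ᶠ t in 𝓝 (0 : ℝ), HasDerivAt (fun s : ℝ => u (x + s • v)) (fderiv ℝ u (x + t • v) v) t := by
  have hline : Tendsto (fun t : ℝ => x + t • v) (𝓝 0) (𝓝 x) := by
    simpa using (hasDerivAt_add_smul x v 0).continuousAt.tendsto
  filter_upwards [hline.eventually (hu.eventually (by simp))] with t ht
  exact (ht.differentiableAt (by simp)).hasFDerivAt.comp_hasDerivAt t (hasDerivAt_add_smul x v t)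

theorem ContDiffAt.hasDerivAt_fderiv_comp_add_smul (hu : ContDiffAt ℝ 2 u x) (v : E) :
    HasDerivAt (fun s : ℝ => fderiv ℝ u (x + s • v) v) (fderiv ℝ (fderiv ℝ u) x v v) 0 := by
  simpa using (hu.differentiableAt_fderiv.hasFDerivAt.comp_hasDerivAt_of_eq 0
    (hasDerivAt_add_smul x v 0) (by simp)).clm_apply (hasDerivAt_const 0 v)

theorem hasDerivAt_quadratic (α β γ t : ℝ) :
    HasDerivAt (fun s : ℝ => α + β * s + γ * s ^ 2) (β + 2 * γ * t) t :=
  ((((hasDerivAt_id t).const_mul β).const_add α).add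
    ((hasDerivAt_pow 2 t).const_mul γ)).congr_deriv (by simp; ring)

theorem ContDiffAt.hasDerivAt_sub_quadratic_along_line (hu : ContDiffAt ℝ 2 u x) {q : E → ℝ}
    {β γ : ℝ} (hq : ∀ t : ℝ, q (x + t • v) = q x + β * t + γ * t ^ 2) :
    (∀ᶠ t in 𝓝 (0 : ℝ), HasDerivAt (fun s : ℝ => u (x + s • v) - q (x + s • v))
      (fderiv ℝ u (x + t • v) v - (β + 2 * γ * t)) t) ∧
    HasDerivAt (fun t : ℝ => fderiv ℝ u (x + t • v) v - (β + 2 * γ * t))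
      (fderiv ℝ (fderiv ℝ u) x v v - 2 * γ) 0 := by
  simp_rw [hq]
  refine ⟨(hu.eventually_hasDerivAt_comp_add_smul v).mono fun t ht =>
    ht.sub (hasDerivAt_quadratic _ _ _ t), ?_⟩
  have hlin := ((hasDerivAt_id (0 : ℝ)).const_mul (2 * γ)).const_add β
  rw [mul_one] at hlin
  exact (hu.hasDerivAt_fderiv_comp_add_smul v).sub hlin

theorem ContDiffAt.two_mul_le_fderiv_fderiv_of_isLocalMin_sub (hu : ContDiffAt ℝ 2 u x)
    {q : E → ℝ} {β γ : ℝ} (hq : ∀ t : ℝ, q (x + t • v) = q x + β * t + γ * t ^ 2)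
    (hmin : IsLocalMin (fun y => u y - q y) x) : 2 * γ ≤ fderiv ℝ (fderiv ℝ u) x v v := by
  have hline : IsLocalMin (fun s : ℝ => u (x + s • v) - q (x + s • v)) 0 :=
    IsLocalMin.comp_continuous (f := fun y => u y - q y) (by simpa using hmin)
      (hasDerivAt_add_smul x v 0).continuousAt
  obtain ⟨h₁, h₂⟩ := hu.hasDerivAt_sub_quadratic_along_line hq
  linarith [hline.nonneg_of_hasDerivAt_of_hasDerivAt h₁ h₂]

theorem ContDiffAt.fderiv_fderiv_le_two_mul_of_isLocalMax_sub (hu : ContDiffAt ℝ 2 u x)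
    {q : E → ℝ} {β γ : ℝ} (hq : ∀ t : ℝ, q (x + t • v) = q x + β * t + γ * t ^ 2)
    (hmax : IsLocalMax (fun y => u y - q y) x) : fderiv ℝ (fderiv ℝ u) x v v ≤ 2 * γ := by
  have hline : IsLocalMax (fun s : ℝ => u (x + s • v) - q (x + s • v)) 0 :=
    IsLocalMax.comp_continuous (f := fun y => u y - q y) (by simpa using hmax)
      (hasDerivAt_add_smul x v 0).continuousAt
  obtain ⟨h₁, h₂⟩ := hu.hasDerivAt_sub_quadratic_along_line hq
  linarith [hline.nonpos_of_hasDerivAt_of_hasDerivAt h₁ h₂]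

theorem ConvexOn.add_fderiv_sub_le {Ω : Set E} (hconv : ConvexOn ℝ Ω u) {y : E}
    {f' : E →L[ℝ] ℝ} (hx : x ∈ Ω) (hy : y ∈ Ω) (hf : HasFDerivAt u f' x) :
    u x + f' (y - x) ≤ u y := by
  let ℓ : ℝ →ᵃ[ℝ] E := AffineMap.lineMap x y
  have hd : HasDerivAt (u ∘ ℓ) (f' (y - x)) 0 :=
    hf.comp_hasDerivAt_of_eq 0 AffineMap.hasDerivAt_lineMap (by simp [ℓ])
  have := (hconv.comp_affineMap ℓ).le_slope_of_hasDerivAt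
    (by simpa [ℓ]) (by simpa [ℓ]) zero_lt_one hd
  simp [slope, ℓ] at this
  linarith [map_sub f' y x]

theorem ConvexOn.fderiv_fderiv_nonneg {Ω : Set E} (hconv : ConvexOn ℝ Ω u) (hΩ : Ω ∈ 𝓝 x)
    (hu : ContDiffAt ℝ 2 u x) (v : E) : 0 ≤ fderiv ℝ (fderiv ℝ u) x v v := by
  have hf : HasFDerivAt u (fderiv ℝ u x) x := (hu.differentiableAt (by norm_num)).hasFDerivAt
  have hmin : IsLocalMin (fun y => u y - (u x + fderiv ℝ u x (y - x))) x := by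
    filter_upwards [hΩ] with y hy
    simp only [sub_self, map_zero, add_zero]
    linarith [hconv.add_fderiv_sub_le (mem_of_mem_nhds hΩ) hy hf]
  have := hu.two_mul_le_fderiv_fderiv_of_isLocalMin_sub (v := v) (γ := 0) (β := fderiv ℝ u x v)
    (fun t => by simp [mul_comm]) hmin
  simpa using this

end Calculus

section Barrier

variable {E : Type*} [NormedAddCommGroup E] [InnerProductSpace ℝ E] {u : E → ℝ} {x : E}
  (A : E ≃L[ℝ] E) (b G p : E) (κ c : ℝ)

/-- A quadratic whose Hessian is `c (A Aᵀ)⁻¹`, i.e. `c` times the identity in the coordinates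
`z = A⁻¹(y - b)`. -/
noncomputable def quadBarrier (y : E) : ℝ := κ + ⟪G, y - p⟫ + c / 2 * ‖A.symm (y - b)‖ ^ 2

theorem continuous_quadBarrier : Continuous (quadBarrier A b G p κ c) := by
  unfold quadBarrier
  fun_prop

theorem quadBarrier_add_smul (x w : E) (t : ℝ) :
    quadBarrier A b G p κ c (x + t • A w) = quadBarrier A b G p κ c x
      + (⟪G, A w⟫ + c * ⟪A.symm (x - b), w⟫) * t + c / 2 * ‖w‖ ^ 2 * t ^ 2 := by
  have hz : A.symm (x + t • A w - b) = A.symm (x - b) + t • w := by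
    rw [show x + t • A w - b = (x - b) + t • A w by abel, map_add, map_smul,
      ContinuousLinearEquiv.symm_apply_apply]
  simp only [quadBarrier, hz, norm_add_sq_real, norm_smul, inner_add_right, real_inner_smul_right,
    show x + t • A w - p = (x - p) + t • A w by abel, mul_pow, Real.norm_eq_abs, sq_abs]
  ring

variable {A b G p κ c}

theorem ContDiffAt.mul_sq_norm_le_of_isLocalMin_sub_quadBarrier (hu : ContDiffAt ℝ 2 u x)
    (hmin : IsLocalMin (fun y => u y - quadBarrier A b G p κ c y) x) (w : E) :
    c * ‖w‖ ^ 2 ≤ fderiv ℝ (fderiv ℝ u) x (A w) (A w) := by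
  have := hu.two_mul_le_fderiv_fderiv_of_isLocalMin_sub (quadBarrier_add_smul A b G p κ c x w) hmin
  linarith

theorem ContDiffAt.le_mul_sq_norm_of_isLocalMax_sub_quadBarrier (hu : ContDiffAt ℝ 2 u x)
    (hmax : IsLocalMax (fun y => u y - quadBarrier A b G p κ c y) x) (w : E) :
    fderiv ℝ (fderiv ℝ u) x (A w) (A w) ≤ c * ‖w‖ ^ 2 := by
  have := hu.fderiv_fderiv_le_two_mul_of_isLocalMax_sub (quadBarrier_add_smul A b G p κ c x w) hmax
  linarith

end Barrier

section MatrixDet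

variable {ι : Type*} [Fintype ι] [DecidableEq ι] {M : Matrix ι ι ℝ} {c : ℝ}

theorem Matrix.IsHermitian.eigenvalues_eq_dotProduct (hM : M.IsHermitian) (i : ι) :
    hM.eigenvalues i = ⇑(hM.eigenvectorBasis i) ⬝ᵥ (M *ᵥ ⇑(hM.eigenvectorBasis i)) := by
  simpa using hM.eigenvalues_eq i

theorem Matrix.IsHermitian.dotProduct_eigenvectorBasis_self (hM : M.IsHermitian) (i : ι) :
    ⇑(hM.eigenvectorBasis i) ⬝ᵥ ⇑(hM.eigenvectorBasis i) = 1 := by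
  have := real_inner_self_eq_norm_sq (hM.eigenvectorBasis i)
  rw [EuclideanSpace.inner_eq_star_dotProduct, hM.eigenvectorBasis.orthonormal.1 i] at this
  simpa using this

theorem Matrix.IsHermitian.det_eq_prod_eigenvalues_real (hM : M.IsHermitian) :
    M.det = ∏ i, hM.eigenvalues i := by
  simpa using hM.det_eq_prod_eigenvalues

theorem Matrix.IsHermitian.pow_card_le_det (hM : M.IsHermitian) (hc : 0 ≤ c)
    (h : ∀ w, c * (w ⬝ᵥ w) ≤ w ⬝ᵥ (M *ᵥ w)) : c ^ Fintype.card ι ≤ M.det := by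
  have heig (i : ι) : c ≤ hM.eigenvalues i := by
    simpa [hM.eigenvalues_eq_dotProduct, hM.dotProduct_eigenvectorBasis_self] using
      h (hM.eigenvectorBasis i)
  rw [hM.det_eq_prod_eigenvalues_real, ← Finset.card_univ, ← Finset.prod_const]
  exact Finset.prod_le_prod (fun _ _ => hc) fun i _ => heig i

theorem Matrix.IsHermitian.det_le_pow_card (hM : M.IsHermitian)
    (h₀ : ∀ w, 0 ≤ w ⬝ᵥ (M *ᵥ w)) (h : ∀ w, w ⬝ᵥ (M *ᵥ w) ≤ c * (w ⬝ᵥ w)) :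
    M.det ≤ c ^ Fintype.card ι := by
  have heig (i : ι) : 0 ≤ hM.eigenvalues i ∧ hM.eigenvalues i ≤ c := by
    simpa [hM.eigenvalues_eq_dotProduct, hM.dotProduct_eigenvectorBasis_self] using
      And.intro (h₀ (hM.eigenvectorBasis i)) (h (hM.eigenvectorBasis i))
  rw [hM.det_eq_prod_eigenvalues_real, ← Finset.card_univ, ← Finset.prod_const]
  exact Finset.prod_le_prod (fun i _ => (heig i).1) fun i _ => (heig i).2

end MatrixDet

section Hessian

variable {n : ℕ} {u : EuclideanSpace ℝ (Fin n) → ℝ} {x : EuclideanSpace ℝ (Fin n)}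

theorem D2_eq_fderiv_fderiv (hu : DifferentiableAt ℝ (fderiv ℝ u) x) (i j : Fin n) :
    D2 u x i j =
      fderiv ℝ (fderiv ℝ u) x (EuclideanSpace.single j 1) (EuclideanSpace.single i 1) := by
  rw [D2, fderiv_clm_apply hu (differentiableAt_const _)]
  simp

theorem dotProduct_Hess_mulVec (hu : DifferentiableAt ℝ (fderiv ℝ u) x)
    (w : EuclideanSpace ℝ (Fin n)) :
    w.ofLp ⬝ᵥ (Hess u x *ᵥ w.ofLp) = fderiv ℝ (fderiv ℝ u) x w w := by
  conv_rhs => rw [← (EuclideanSpace.basisFun (Fin n) ℝ).sum_repr w]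
  simp [dotProduct, mulVec, Hess, D2_eq_fderiv_fderiv hu, Finset.mul_sum, mul_comm]

theorem isHermitian_Hess (hu : ContDiffAt ℝ 2 u x) : (Hess u x).IsHermitian := by
  have hsymm := hu.isSymmSndFDerivAt (by simp)
  refine Matrix.IsHermitian.ext fun i j => ?_
  simpa [Hess, D2_eq_fderiv_fderiv hu.differentiableAt_fderiv] using hsymm _ _

end Hessian

section NormalizedHessian

variable {n : ℕ} {u : EuclideanSpace ℝ (Fin n) → ℝ} {x : EuclideanSpace ℝ (Fin n)}
  (A : EuclideanSpace ℝ (Fin n) ≃L[ℝ] EuclideanSpace ℝ (Fin n))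

/-- `Aᵀ (D²u x) A`, the Hessian of `u` in the coordinates `y = A z`. -/
noncomputable def normalizedHess (u : EuclideanSpace ℝ (Fin n) → ℝ)
    (x : EuclideanSpace ℝ (Fin n)) : Matrix (Fin n) (Fin n) ℝ :=
  (toEuclideanLin.symm (A : EuclideanSpace ℝ (Fin n) →ₗ[ℝ] EuclideanSpace ℝ (Fin n)))ᴴ * Hess u x *
    toEuclideanLin.symm (A : EuclideanSpace ℝ (Fin n) →ₗ[ℝ] EuclideanSpace ℝ (Fin n))

theorem isHermitian_normalizedHess (hu : ContDiffAt ℝ 2 u x) :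
    (normalizedHess A u x).IsHermitian :=
  isHermitian_conjTranspose_mul_mul _ (isHermitian_Hess hu)

theorem det_normalizedHess :
    (normalizedHess A u x).det =
      LinearMap.det (A : EuclideanSpace ℝ (Fin n) →ₗ[ℝ] EuclideanSpace ℝ (Fin n)) ^ 2 *
        (Hess u x).det := by
  have hdet := LinearMap.det_toLin (EuclideanSpace.basisFun (Fin n) ℝ).toBasis
    (toEuclideanLin.symm (A : EuclideanSpace ℝ (Fin n) →ₗ[ℝ] EuclideanSpace ℝ (Fin n)))
  rw [← toEuclideanLin_eq_toLin_orthonormal, LinearEquiv.apply_symm_apply] at hdet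
  simp [normalizedHess, det_mul, hdet]
  ring

theorem dotProduct_normalizedHess_mulVec (hu : DifferentiableAt ℝ (fderiv ℝ u) x)
    (w : EuclideanSpace ℝ (Fin n)) :
    w.ofLp ⬝ᵥ (normalizedHess A u x *ᵥ w.ofLp) = fderiv ℝ (fderiv ℝ u) x (A w) (A w) := by
  have hA : toEuclideanLin.symm (A : EuclideanSpace ℝ (Fin n) →ₗ[ℝ] EuclideanSpace ℝ (Fin n))
      *ᵥ w.ofLp = (A w).ofLp := by
    have := toLpLin_apply 2 2
      (toEuclideanLin.symm (A : EuclideanSpace ℝ (Fin n) →ₗ[ℝ] EuclideanSpace ℝ (Fin n))) w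
    rw [LinearEquiv.apply_symm_apply] at this
    exact congrArg WithLp.ofLp this.symm
  rw [normalizedHess, ← mulVec_mulVec, ← mulVec_mulVec, dotProduct_mulVec,
    conjTranspose_eq_transpose_of_trivial, vecMul_transpose, hA, dotProduct_Hess_mulVec hu]

theorem EuclideanSpace.norm_sq_eq_dotProduct (w : EuclideanSpace ℝ (Fin n)) :
    ‖w‖ ^ 2 = w.ofLp ⬝ᵥ w.ofLp := by
  rw [← real_inner_self_eq_norm_sq, EuclideanSpace.inner_eq_star_dotProduct]
  simp

theorem pow_le_sq_det_mul_det_Hess (hu : ContDiffAt ℝ 2 u x) {c : ℝ} (hc : 0 ≤ c)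
    (h : ∀ w, c * ‖w‖ ^ 2 ≤ fderiv ℝ (fderiv ℝ u) x (A w) (A w)) :
    c ^ n ≤ LinearMap.det (A : EuclideanSpace ℝ (Fin n) →ₗ[ℝ] EuclideanSpace ℝ (Fin n)) ^ 2 *
      (Hess u x).det := by
  rw [← det_normalizedHess]
  simpa using (isHermitian_normalizedHess A hu).pow_card_le_det hc fun w => by
    simpa [EuclideanSpace.norm_sq_eq_dotProduct,
      ← dotProduct_normalizedHess_mulVec A hu.differentiableAt_fderiv] using h (WithLp.toLp 2 w)

theorem sq_det_mul_det_Hess_le_pow (hu : ContDiffAt ℝ 2 u x) {c : ℝ}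
    (h₀ : ∀ v, 0 ≤ fderiv ℝ (fderiv ℝ u) x v v)
    (h : ∀ w, fderiv ℝ (fderiv ℝ u) x (A w) (A w) ≤ c * ‖w‖ ^ 2) :
    LinearMap.det (A : EuclideanSpace ℝ (Fin n) →ₗ[ℝ] EuclideanSpace ℝ (Fin n)) ^ 2 *
      (Hess u x).det ≤ c ^ n := by
  rw [← det_normalizedHess]
  simpa using (isHermitian_normalizedHess A hu).det_le_pow_card
    (fun w => by
      simpa [← dotProduct_normalizedHess_mulVec A hu.differentiableAt_fderiv] using
        h₀ (A (WithLp.toLp 2 w)))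
    fun w => by
      simpa [EuclideanSpace.norm_sq_eq_dotProduct,
        ← dotProduct_normalizedHess_mulVec A hu.differentiableAt_fderiv] using h (WithLp.toLp 2 w)

end NormalizedHessian

section AffineNormalization

variable {E : Type*} [NormedAddCommGroup E] [NormedSpace ℝ E] {A : E ≃L[ℝ] E} {b x : E}
  {S : Set E} {r : ℝ}

theorem norm_symm_sub_le_of_mem_closure (hS : (fun z => A z + b) ⁻¹' S ⊆ Metric.ball 0 r)
    (hx : x ∈ closure S) : ‖A.symm (x - b)‖ ≤ r := by
  refine closure_minimal (fun y hy => ?_)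
    (isClosed_le (f := fun y => ‖A.symm (y - b)‖) (by fun_prop) continuous_const) hx
  have := hS (show A (A.symm (y - b)) + b ∈ S by simpa using hy)
  exact (mem_ball_zero_iff.mp this).le

theorem le_norm_symm_sub_of_notMem (hS : Metric.ball 0 r ⊆ (fun z => A z + b) ⁻¹' S)
    (hx : x ∉ S) : r ≤ ‖A.symm (x - b)‖ := by
  by_contra! hlt
  exact hx (by simpa using hS (mem_ball_zero_iff.mpr hlt))

end AffineNormalization

section Sections

variable {n : ℕ} {Ω : Set (EuclideanSpace ℝ (Fin n))} {u : EuclideanSpace ℝ (Fin n) → ℝ}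
  {x₀ x : EuclideanSpace ℝ (Fin n)} {h : ℝ}

theorem isOpen_sectMA (hΩ : IsOpen Ω) (hu : ContinuousOn u Ω) : IsOpen (sectMA Ω u x₀ h) := by
  have : sectMA Ω u x₀ h = Ω ∩ (fun y => u y - (u x₀ + ⟪gradient u x₀, y - x₀⟫ + h)) ⁻¹' Iio 0 := by
    ext y
    simp [sectMA]
  rw [this]
  exact (hu.sub (by fun_prop)).isOpen_inter_preimage hΩ isOpen_Iio

theorem self_mem_sectMA (hx₀ : x₀ ∈ Ω) (hh : 0 < h) : x₀ ∈ sectMA Ω u x₀ h :=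
  ⟨hx₀, by simpa using hh⟩

theorem le_of_mem_closure_sectMA (hu : ContinuousOn u Ω) (hcl : closure (sectMA Ω u x₀ h) ⊆ Ω)
    (hx : x ∈ closure (sectMA Ω u x₀ h)) : u x ≤ u x₀ + ⟪gradient u x₀, x - x₀⟫ + h :=
  ContinuousWithinAt.closure_le hx ((hu x (hcl hx)).mono (subset_closure.trans hcl))
    (by fun_prop) fun _ hy => hy.2.le

theorem le_of_notMem_sectMA (hx : x ∈ Ω) (hxS : x ∉ sectMA Ω u x₀ h) :
    u x₀ + ⟪gradient u x₀, x - x₀⟫ + h ≤ u x := by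
  simpa [sectMA, hx] using hxS

end Sections

section Estimates

variable {n : ℕ} {Ω : Set (EuclideanSpace ℝ (Fin n))} {u : EuclideanSpace ℝ (Fin n) → ℝ}
  {x₀ : EuclideanSpace ℝ (Fin n)} {h : ℝ}
  {A : EuclideanSpace ℝ (Fin n) ≃L[ℝ] EuclideanSpace ℝ (Fin n)} {b : EuclideanSpace ℝ (Fin n)}

theorem pow_le_sq_det_mul_of_sectMA_subset_ball (hΩ : IsOpen Ω) (hu : ContDiffOn ℝ 2 u Ω)
    {Λ : ℝ} (hdet : ∀ x ∈ Ω, (Hess u x).det ≤ Λ) (hx₀ : x₀ ∈ Ω) (hh : 0 < h)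
    (hcl : closure (sectMA Ω u x₀ h) ⊆ Ω) (hcpt : IsCompact (closure (sectMA Ω u x₀ h)))
    (hsub : (fun z => A z + b) ⁻¹' sectMA Ω u x₀ h ⊆ Metric.ball 0 n) :
    (h / n ^ 2) ^ n ≤
      LinearMap.det (A : EuclideanSpace ℝ (Fin n) →ₗ[ℝ] EuclideanSpace ℝ (Fin n)) ^ 2 * Λ := by
  set S := sectMA Ω u x₀ h
  set c := h / n ^ 2
  set P := fun y => u y - quadBarrier A b (gradient u x₀) x₀ (u x₀ + h - c * n ^ 2 / 2) c y
  have hx₀S : x₀ ∈ S := self_mem_sectMA hx₀ hh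
  have hz₀ : ‖A.symm (x₀ - b)‖ < n := by
    simpa using hsub (show A (A.symm (x₀ - b)) + b ∈ S by simpa using hx₀S)
  have hn : (0 : ℝ) < n := (norm_nonneg _).trans_lt hz₀
  have hc : 0 ≤ c := by positivity
  have hcn : c * n ^ 2 = h := div_mul_cancel₀ h (pow_pos hn 2).ne'
  obtain ⟨xs, hxs, hmin⟩ := hcpt.exists_isMinOn (f := P) ⟨x₀, subset_closure hx₀S⟩
    ((hu.continuousOn.mono hcl).sub (continuous_quadBarrier ..).continuousOn)
  have hxsS : xs ∈ S := by
    by_contra hxsS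
    have hz : ‖A.symm (xs - b)‖ ^ 2 ≤ n ^ 2 :=
      pow_le_pow_left₀ (norm_nonneg _) (norm_symm_sub_le_of_mem_closure hsub hxs) 2
    have hPxs : 0 ≤ P xs := by
      have := le_of_notMem_sectMA (hcl hxs) hxsS
      simp only [P, quadBarrier]
      linarith [mul_le_mul_of_nonneg_left hz (by positivity : 0 ≤ c / 2)]
    have hPx₀ : P x₀ < 0 := by
      simp only [P, quadBarrier, sub_self, inner_zero_right]
      linarith [mul_nonneg (by positivity : 0 ≤ c / 2) (sq_nonneg ‖A.symm (x₀ - b)‖)]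
    linarith [isMinOn_iff.mp hmin x₀ (subset_closure hx₀S)]
  have hC2 : ContDiffAt ℝ 2 u xs := hu.contDiffAt (hΩ.mem_nhds hxsS.1)
  have hloc : IsLocalMin P xs :=
    (hmin.on_subset subset_closure).isLocalMin ((isOpen_sectMA hΩ hu.continuousOn).mem_nhds hxsS)
  calc c ^ n ≤ LinearMap.det (A : EuclideanSpace ℝ (Fin n) →ₗ[ℝ] EuclideanSpace ℝ (Fin n)) ^ 2 *
        (Hess u xs).det :=
        pow_le_sq_det_mul_det_Hess A hC2 hc
          (hC2.mul_sq_norm_le_of_isLocalMin_sub_quadBarrier hloc)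
    _ ≤ _ := mul_le_mul_of_nonneg_left (hdet xs hxsS.1) (sq_nonneg _)

theorem sq_det_mul_le_pow_of_ball_subset_sectMA (hΩ : IsOpen Ω) (hconv : ConvexOn ℝ Ω u)
    (hu : ContDiffOn ℝ 2 u Ω) {lam : ℝ} (hdet : ∀ x ∈ Ω, lam ≤ (Hess u x).det) (hx₀ : x₀ ∈ Ω)
    (hh : 0 < h) (hcl : closure (sectMA Ω u x₀ h) ⊆ Ω)
    (hcpt : IsCompact (closure (sectMA Ω u x₀ h)))
    (hsub : Metric.ball 0 1 ⊆ (fun z => A z + b) ⁻¹' sectMA Ω u x₀ h) :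
    LinearMap.det (A : EuclideanSpace ℝ (Fin n) →ₗ[ℝ] EuclideanSpace ℝ (Fin n)) ^ 2 * lam ≤
      (4 * h) ^ n := by
  set S := sectMA Ω u x₀ h
  set c := 4 * h
  set Q := fun y => u y - quadBarrier A b (gradient u x₀) x₀ (u x₀ + h - c / 2) c y
  have hbS : b ∈ S := by simpa using hsub (Metric.mem_ball_self one_pos)
  have hsupport : u x₀ + ⟪gradient u x₀, b - x₀⟫ ≤ u b := by
    have hgrad := hasGradientAt_iff_hasFDerivAt.mp
      ((hu.differentiableOn (by norm_num) x₀ hx₀).differentiableAt (hΩ.mem_nhds hx₀)).hasGradientAt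
    simpa using hconv.add_fderiv_sub_le hx₀ hbS.1 hgrad
  obtain ⟨xt, hxt, hmax⟩ := hcpt.exists_isMaxOn (f := Q) ⟨b, subset_closure hbS⟩
    ((hu.continuousOn.mono hcl).sub (continuous_quadBarrier ..).continuousOn)
  have hxtS : xt ∈ S := by
    by_contra hxtS
    have hz : 1 ≤ ‖A.symm (xt - b)‖ ^ 2 :=
      one_le_pow₀ (le_norm_symm_sub_of_notMem hsub hxtS)
    have hQxt : Q xt ≤ 0 := by
      have := le_of_mem_closure_sectMA hu.continuousOn hcl hxt
      simp only [Q, quadBarrier]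
      linarith [mul_le_mul_of_nonneg_left hz (by positivity : 0 ≤ c / 2)]
    have hQb : 0 < Q b := by
      simp only [Q, quadBarrier, sub_self, map_zero, norm_zero]
      linarith
    linarith [isMaxOn_iff.mp hmax b (subset_closure hbS)]
  have hC2 : ContDiffAt ℝ 2 u xt := hu.contDiffAt (hΩ.mem_nhds hxtS.1)
  have hloc : IsLocalMax Q xt :=
    (hmax.on_subset subset_closure).isLocalMax ((isOpen_sectMA hΩ hu.continuousOn).mem_nhds hxtS)
  calc _ ≤ LinearMap.det (A : EuclideanSpace ℝ (Fin n) →ₗ[ℝ] EuclideanSpace ℝ (Fin n)) ^ 2 *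
        (Hess u xt).det := mul_le_mul_of_nonneg_left (hdet xt hxtS.1) (sq_nonneg _)
    _ ≤ c ^ n := sq_det_mul_det_Hess_le_pow A hC2
        (hconv.fderiv_fderiv_nonneg (hΩ.mem_nhds hxtS.1) hC2)
        (hC2.le_mul_sq_norm_of_isLocalMax_sub_quadBarrier hloc)

end Estimates

section Arithmetic

variable {a h K : ℝ} {n : ℕ}

theorem sq_rpow_div_two (hh : 0 ≤ h) : (h ^ ((n : ℝ) / 2)) ^ 2 = h ^ n := by
  rw [Real.rpow_div_two_eq_sqrt _ hh, Real.rpow_natCast, ← pow_mul, mul_comm, pow_mul,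
    Real.sq_sqrt hh]

theorem inv_mul_rpow_div_two_le_abs (hh : 0 ≤ h) (hK : 0 < K) (hle : h ^ n ≤ K ^ 2 * a ^ 2) :
    K⁻¹ * h ^ ((n : ℝ) / 2) ≤ |a| := by
  rw [inv_mul_le_iff₀ hK]
  refine le_of_abs_le (abs_le_of_sq_le_sq ?_ (by positivity))
  rwa [sq_rpow_div_two hh, mul_pow, sq_abs]

theorem abs_le_mul_rpow_div_two (hh : 0 ≤ h) (hK : 0 ≤ K) (hle : a ^ 2 ≤ K ^ 2 * h ^ n) :
    |a| ≤ K * h ^ ((n : ℝ) / 2) :=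
  abs_le_of_sq_le_sq (by rwa [mul_pow, sq_rpow_div_two hh]) (by positivity)

end Arithmetic

theorem stmt7_general (n : ℕ) (lam Lam : ℝ) (hlam : 0 < lam) :
    ∃ C > (0:ℝ), ∀ (Ω : Set (EuclideanSpace ℝ (Fin n)))
      (u : EuclideanSpace ℝ (Fin n) → ℝ) (x₀ : EuclideanSpace ℝ (Fin n)) (h : ℝ)
      (A : EuclideanSpace ℝ (Fin n) ≃L[ℝ] EuclideanSpace ℝ (Fin n))
      (b : EuclideanSpace ℝ (Fin n)),
      IsOpen Ω → Convex ℝ Ω → StrictConvexOn ℝ Ω u → ContDiffOn ℝ 2 u Ω →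
      (∀ x ∈ Ω, lam ≤ (Hess u x).det ∧ (Hess u x).det ≤ Lam) →
      x₀ ∈ Ω → 0 < h →
      closure (sectMA Ω u x₀ h) ⊆ Ω → IsCompact (closure (sectMA Ω u x₀ h)) →
      Metric.ball (0 : EuclideanSpace ℝ (Fin n)) 1 ⊆
        (fun x => A x + b) ⁻¹' (sectMA Ω u x₀ h) →
      (fun x => A x + b) ⁻¹' (sectMA Ω u x₀ h) ⊆
        Metric.ball (0 : EuclideanSpace ℝ (Fin n)) n →
      C⁻¹ * h ^ ((n : ℝ) / 2) ≤
          |LinearMap.det ((A : EuclideanSpace ℝ (Fin n) →L[ℝ] EuclideanSpace ℝ (Fin n)) :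
            EuclideanSpace ℝ (Fin n) →ₗ[ℝ] EuclideanSpace ℝ (Fin n))| ∧
        |LinearMap.det ((A : EuclideanSpace ℝ (Fin n) →L[ℝ] EuclideanSpace ℝ (Fin n)) :
            EuclideanSpace ℝ (Fin n) →ₗ[ℝ] EuclideanSpace ℝ (Fin n))| ≤
          C * h ^ ((n : ℝ) / 2) := by
  refine ⟨max (n ^ n * √Lam) (2 ^ n / √lam), lt_max_of_lt_right (by positivity), ?_⟩
  intro Ω u x₀ h A b hΩ _ hconv hu hdet hx₀ hh hcl hcpt hin hout
  have hn : (0 : ℝ) < n := by simpa using hout (hin (Metric.mem_ball_self one_pos))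
  have hLam : 0 < Lam := hlam.trans_le ((hdet x₀ hx₀).1.trans (hdet x₀ hx₀).2)
  have hlow := pow_le_sq_det_mul_of_sectMA_subset_ball hΩ hu (fun x hx => (hdet x hx).2) hx₀ hh
    hcl hcpt hout
  have hup := sq_det_mul_le_pow_of_ball_subset_sectMA hΩ hconv.convexOn hu
    (fun x hx => (hdet x hx).1) hx₀ hh hcl hcpt hin
  set d := LinearMap.det ((A : EuclideanSpace ℝ (Fin n) →L[ℝ] EuclideanSpace ℝ (Fin n)) :
    EuclideanSpace ℝ (Fin n) →ₗ[ℝ] EuclideanSpace ℝ (Fin n))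
  have hlow' : h ^ n ≤ (n ^ n * √Lam) ^ 2 * d ^ 2 :=
    calc h ^ n = ((n : ℝ) ^ n) ^ 2 * (h / n ^ 2) ^ n := by
          rw [div_pow, ← pow_mul, ← pow_mul, mul_comm 2 n, mul_div_cancel₀ _ (by positivity)]
      _ ≤ ((n : ℝ) ^ n) ^ 2 * (d ^ 2 * Lam) := by gcongr; exact hlow
      _ = _ := by rw [mul_pow, Real.sq_sqrt hLam.le]; ring
  have hup' : d ^ 2 ≤ (2 ^ n / √lam) ^ 2 * h ^ n := by
    rw [div_pow, Real.sq_sqrt hlam.le, ← pow_mul, mul_comm n 2, pow_mul, div_mul_eq_mul_div,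
      le_div_iff₀ hlam, ← mul_pow]
    norm_num
    exact hup
  constructor
  · calc _ ≤ (n ^ n * √Lam)⁻¹ * h ^ ((n : ℝ) / 2) := by gcongr; exact le_max_left _ _
      _ ≤ |d| := inv_mul_rpow_div_two_le_abs hh.le (by positivity) hlow'
  · calc |d| ≤ 2 ^ n / √lam * h ^ ((n : ℝ) / 2) :=
          abs_le_mul_rpow_div_two hh.le (by positivity) hup'
      _ ≤ _ := by gcongr; exact le_max_right _ _

/-- for the John normalization `T x = A_h x + b_h` of a section, the
determinant of `A_h` is comparable to `h^{n/2}`. -/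
theorem stmt7 (n : ℕ) (hn : 2 ≤ n) (lam Lam : ℝ) (hlam : 0 < lam) (hlamLam : lam ≤ Lam) :
    ∃ C > (0:ℝ), ∀ (Ω : Set (EuclideanSpace ℝ (Fin n)))
      (u : EuclideanSpace ℝ (Fin n) → ℝ) (x₀ : EuclideanSpace ℝ (Fin n)) (h : ℝ)
      (A : EuclideanSpace ℝ (Fin n) ≃L[ℝ] EuclideanSpace ℝ (Fin n))
      (b : EuclideanSpace ℝ (Fin n)),
      IsOpen Ω → Convex ℝ Ω → StrictConvexOn ℝ Ω u → ContDiffOn ℝ 2 u Ω →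
      (∀ x ∈ Ω, lam ≤ (Hess u x).det ∧ (Hess u x).det ≤ Lam) →
      x₀ ∈ Ω → 0 < h →
      closure (sectMA Ω u x₀ h) ⊆ Ω → IsCompact (closure (sectMA Ω u x₀ h)) →
      Metric.ball (0 : EuclideanSpace ℝ (Fin n)) 1 ⊆
        (fun x => A x + b) ⁻¹' (sectMA Ω u x₀ h) →
      (fun x => A x + b) ⁻¹' (sectMA Ω u x₀ h) ⊆
        Metric.ball (0 : EuclideanSpace ℝ (Fin n)) n →
      C⁻¹ * h ^ ((n : ℝ) / 2) ≤
          |LinearMap.det ((A : EuclideanSpace ℝ (Fin n) →L[ℝ] EuclideanSpace ℝ (Fin n)) :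
            EuclideanSpace ℝ (Fin n) →ₗ[ℝ] EuclideanSpace ℝ (Fin n))| ∧
        |LinearMap.det ((A : EuclideanSpace ℝ (Fin n) →L[ℝ] EuclideanSpace ℝ (Fin n)) :
            EuclideanSpace ℝ (Fin n) →ₗ[ℝ] EuclideanSpace ℝ (Fin n))| ≤
          C * h ^ ((n : ℝ) / 2) :=
  stmt7_general n lam Lam hlam
end
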